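/- arXiv:1809.03939 — 4 statements merged into one kernel-verified Lean document; each statement's English description precedes it below -/
import Mathlib

section
/- Consider the heat subsystem of the two-site system with constant boiler heat inputs. Define the set I_h := { x_h ∈ ℝ³ : f_h1(x_h) = 0 and f_h2(x_h) = 0 }, where f_h1 and f_h2 are the right-hand sides of the x_h1- and x_h2-equations. Then I_h is invariant under the flow: every solution x_h : J → ℝ³ of the heat subsystem ODE, defined on an interval J containing 0 and with x_h(0) ∈ I_h, satisfies x_h(t) ∈ I_h for every t ∈ J. -/
/-!
Along a solution, the residuals `g = f_h1(x_h)` and `h = f_h2(x_h)` obey the linear system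
`g' = α h`, `h' = β g + γ(t) h` with `γ(t) = -(λL/d) |x_h2(t)| / T_h3`, the factor `2|x_h2|`
coming from `(u |u|)' = 2 |u|`. On the compact interval between `0` and `t` the coefficient `γ`
is bounded, so `‖(g, h)'‖ ≤ K ‖(g, h)‖` there, and Grönwall's inequality keeps `(g, h)`, which
vanishes at time `0`, equal to zero.
-/

noncomputable section

/-- Right-hand side of the `x_h1`-equation (depends only on `x_h2`). -/
def fh1 (Th1 Th2 rhos hc Qa1 Qa2 QL1 QL2 : ℝ) (xh2 : ℝ) : ℝ :=
  (Qa1 - QL1 - ((Real.pi / 4) * hc * rhos) * xh2) / Th1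
    - (Qa2 - QL2 + ((Real.pi / 4) * hc * rhos) * xh2) / Th2

/-- Right-hand side of the `x_h2`-equation (depends only on `x_h1, x_h2`). -/
def fh2 (Th3 rhos lam L d : ℝ) (xh1 xh2 : ℝ) : ℝ :=
  (xh1 / rhos - (lam * L / (2 * d)) * xh2 * |xh2|) / Th3

open Set Filter Topology

theorem hasDerivAt_mul_abs (x : ℝ) : HasDerivAt (fun u : ℝ => u * |u|) (2 * |x|) x := by
  rcases eq_or_ne x 0 with rfl | hx
  · rw [hasDerivAt_iff_isLittleO_nhds_zero]
    simpa using (Asymptotics.isBigO_refl (fun h : ℝ => h) (𝓝 0)).mul_isLittleO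
      (Asymptotics.isLittleO_one_iff ℝ |>.2 (continuous_abs.tendsto' 0 0 abs_zero))
  · exact ((hasDerivAt_id' x).mul (hasDerivAt_abs hx)).congr_deriv
      (by rw [self_mul_sign]; ring)

theorem eq_zero_of_norm_deriv_le_mul_norm_of_eq_zero_uIcc {E : Type*} [NormedAddCommGroup E]
    [NormedSpace ℝ E] {f f' : ℝ → E} {K a b : ℝ}
    (hf : ∀ x ∈ uIcc a b, HasDerivAt f (f' x) x) (ha : f a = 0)
    (bound : ∀ x ∈ uIcc a b, ‖f' x‖ ≤ K * ‖f x‖) : f b = 0 := by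
  wlog hab : a ≤ b generalizing f f' a b
  · have hneg : ∀ x ∈ uIcc (-a) (-b), -x ∈ uIcc a b := fun x hx => by
      rwa [← image_neg_uIcc, image_neg_eq_neg, Set.mem_neg] at hx
    simpa using this (f := f ∘ Neg.neg) (f' := fun x => (-1 : ℝ) • f' (-x))
      (fun x hx => (hf (-x) (hneg x hx)).scomp x (hasDerivAt_neg x))
      (by simpa using ha) (fun x hx => by simpa using bound (-x) (hneg x hx)) (by linarith)
  rw [uIcc_of_le hab] at hf bound
  exact eq_zero_of_abs_deriv_le_mul_abs_self_of_eq_zero_right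
    (fun x hx => (hf x hx).continuousAt.continuousWithinAt)
    (fun x hx => (hf x (Ico_subset_Icc_self hx)).hasDerivWithinAt) ha
    (fun x hx => bound x (Ico_subset_Icc_self hx)) b (right_mem_Icc.2 hab)

theorem Prod.norm_mk_smul_smul_add_smul_le {𝕜 E : Type*} [NormedField 𝕜]
    [SeminormedAddCommGroup E] [NormedSpace 𝕜 E] (α β γ : 𝕜) {G : ℝ} (hγ : ‖γ‖ ≤ G) (x y : E) :
    ‖(α • y, β • x + γ • y)‖ ≤ (‖α‖ + ‖β‖ + G) * ‖(x, y)‖ := by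
  have hx : ‖x‖ ≤ ‖(x, y)‖ := norm_fst_le (x, y)
  have hy : ‖y‖ ≤ ‖(x, y)‖ := norm_snd_le (x, y)
  have hG : 0 ≤ G := (norm_nonneg γ).trans hγ
  refine norm_prod_le_iff.2 ⟨?_, ?_⟩
  · rw [norm_smul]
    nlinarith [norm_nonneg α, norm_nonneg β, norm_nonneg (x, y)]
  · calc ‖β • x + γ • y‖ ≤ ‖β‖ * ‖x‖ + ‖γ‖ * ‖y‖ := by
          simpa only [norm_smul] using norm_add_le (β • x) (γ • y)
      _ ≤ (‖α‖ + ‖β‖ + G) * ‖(x, y)‖ := by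
          nlinarith [norm_nonneg α, norm_nonneg β, norm_nonneg (x, y), norm_nonneg γ]

section HeatSubsystem

variable {Th1 Th2 Th3 rhos lam L d hc Qa1 Qa2 QL1 QL2 : ℝ}

theorem hasDerivAt_fh1 (xh2 : ℝ) :
    HasDerivAt (fh1 Th1 Th2 rhos hc Qa1 Qa2 QL1 QL2)
      (-((Real.pi / 4) * hc * rhos) * (Th1⁻¹ + Th2⁻¹)) xh2 := by
  have hx := (hasDerivAt_id' xh2).const_mul ((Real.pi / 4) * hc * rhos)
  exact (((hx.const_sub (Qa1 - QL1)).div_const Th1).sub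
    ((hx.const_add (Qa2 - QL2)).div_const Th2)).congr_deriv (by ring)

theorem hasDerivAt_fh2_comp {x1 x2 : ℝ → ℝ} {u v t : ℝ} (h1 : HasDerivAt x1 u t)
    (h2 : HasDerivAt x2 v t) :
    HasDerivAt (fun s => fh2 Th3 rhos lam L d (x1 s) (x2 s))
      ((rhos * Th3)⁻¹ * u + (-(lam * L / d) * |x2 t| / Th3) * v) t := by
  have key : HasDerivAt (fun s => (x1 s / rhos - lam * L / (2 * d) * (x2 s * |x2 s|)) / Th3)
      ((u / rhos - lam * L / (2 * d) * (2 * |x2 t| * v)) / Th3) t :=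
    ((h1.div_const rhos).sub
      (((hasDerivAt_mul_abs (x2 t)).comp t h2).const_mul (lam * L / (2 * d)))).div_const Th3
  refine (key.congr_deriv (by ring)).congr_of_eventuallyEq (Eventually.of_forall fun s => ?_)
  simp only [fh2, mul_assoc]

end HeatSubsystem

theorem heat_subsystem_invariant_manifold_general
    (Th1 Th2 Th3 rhos lam L d hc : ℝ)
    (Qa1 Qa2 QL1 QL2 : ℝ)
    (J : Set ℝ) (hJ : J.OrdConnected) (h0J : (0 : ℝ) ∈ J)
    (x1 x2 x3 : ℝ → ℝ)
    (hsol : ∀ t ∈ J,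
      HasDerivAt x1 (fh1 Th1 Th2 rhos hc Qa1 Qa2 QL1 QL2 (x2 t)) t ∧
      HasDerivAt x2 (fh2 Th3 rhos lam L d (x1 t) (x2 t)) t ∧
      HasDerivAt x3 (Qa1 - QL1 + Qa2 - QL2) t)
    (hinit : fh1 Th1 Th2 rhos hc Qa1 Qa2 QL1 QL2 (x2 0) = 0 ∧
             fh2 Th3 rhos lam L d (x1 0) (x2 0) = 0) :
    ∀ t ∈ J, fh1 Th1 Th2 rhos hc Qa1 Qa2 QL1 QL2 (x2 t) = 0 ∧
             fh2 Th3 rhos lam L d (x1 t) (x2 t) = 0 := by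
  intro t ht
  have hsub : uIcc 0 t ⊆ J := hJ.uIcc_subset h0J ht
  have hx2 : ContinuousOn x2 (uIcc 0 t) := fun s hs =>
    (hsol s (hsub hs)).2.1.continuousAt.continuousWithinAt
  have hγ : ContinuousOn (fun s => -(lam * L / d) * |x2 s| / Th3) (uIcc 0 t) := by fun_prop
  obtain ⟨G, hG⟩ := isCompact_uIcc.exists_bound_of_continuousOn hγ
  have hres := eq_zero_of_norm_deriv_le_mul_norm_of_eq_zero_uIcc
    (f := fun s => (fh1 Th1 Th2 rhos hc Qa1 Qa2 QL1 QL2 (x2 s), fh2 Th3 rhos lam L d (x1 s) (x2 s)))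
    (fun s hs => ((hasDerivAt_fh1 (x2 s)).comp s (hsol s (hsub hs)).2.1).prodMk
      (hasDerivAt_fh2_comp (hsol s (hsub hs)).1 (hsol s (hsub hs)).2.1))
    (Prod.ext hinit.1 hinit.2)
    (fun s hs => by
      simpa only [smul_eq_mul] using Prod.norm_mk_smul_smul_add_smul_le (E := ℝ) _ _ _ (hG s hs) _ _)
  exact Prod.ext_iff.1 hres

/-- Every solution of the heat subsystem starting (at time `0`)
in `I_h = { x_h : f_h1(x_h) = 0 ∧ f_h2(x_h) = 0 }` remains in `I_h` for all
times in its interval of definition. -/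
theorem heat_subsystem_invariant_manifold
    (Th1 Th2 Th3 rhos lam L d hc : ℝ)
    (hTh1 : 0 < Th1) (hTh2 : 0 < Th2) (hTh3 : 0 < Th3) (hrhos : 0 < rhos)
    (hlam : 0 < lam) (hL : 0 < L) (hd : 0 < d) (hhc : 0 < hc)
    (Qa1 Qa2 QL1 QL2 : ℝ)
    (J : Set ℝ) (hJ : J.OrdConnected) (h0J : (0 : ℝ) ∈ J)
    (x1 x2 x3 : ℝ → ℝ)
    (hsol : ∀ t ∈ J,
      HasDerivAt x1 (fh1 Th1 Th2 rhos hc Qa1 Qa2 QL1 QL2 (x2 t)) t ∧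
      HasDerivAt x2 (fh2 Th3 rhos lam L d (x1 t) (x2 t)) t ∧
      HasDerivAt x3 (Qa1 - QL1 + Qa2 - QL2) t)
    (hinit : fh1 Th1 Th2 rhos hc Qa1 Qa2 QL1 QL2 (x2 0) = 0 ∧
             fh2 Th3 rhos lam L d (x1 0) (x2 0) = 0) :
    ∀ t ∈ J, fh1 Th1 Th2 rhos hc Qa1 Qa2 QL1 QL2 (x2 t) = 0 ∧
             fh2 Th3 rhos lam L d (x1 t) (x2 t) = 0 :=
  heat_subsystem_invariant_manifold_general Th1 Th2 Th3 rhos lam L d hc Qa1 Qa2 QL1 QL2 J hJ h0J x1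
    x2 x3 hsol hinit
end
end

section
/- Consider the heat subsystem of the two-site system with constant boiler heat inputs and the set I_h := { x_h ∈ ℝ³ : f_h1(x_h) = 0 and f_h2(x_h) = 0 }, where f_h1 and f_h2 are the right-hand sides of the x_h1- and x_h2-equations. Every solution x_h : J → ℝ³ with x_h(0) ∈ I_h is given explicitly by x_h1(t) = x_h1(0), x_h2(t) = x_h2(0), and x_h3(t) = x_h3(0) + (Q'_a1 + Q'_a2 − Q'_L1 − Q'_L2)·t for all t ∈ J. In particular, if the total heat generation Q'_a1 + Q'_a2 differs from the total heat load Q'_L1 + Q'_L2, then the averaged pressure x_h3 drifts linearly in time and no solution starting in I_h converges as t → ∞. -/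
/-!
`I_h` is exactly the set where the vector field of the heat subsystem equals `(0, 0, c)` with
`c = Q'_a1 − Q'_L1 + Q'_a2 − Q'_L2`, so through every point of `I_h` passes the explicit solution
with frozen first two components and linearly drifting third one. The vector field is locally
Lipschitz (the only nonsmooth term, `x ↦ x |x|`, is a product of Lipschitz functions), so by
uniqueness for the initial value problem every solution starting in `I_h` is this one. If `c ≠ 0`
the third component is unbounded, hence no such solution converges.
-/

noncomputable section

open Set Filter Topology

lemma LocallyLipschitz.mul' {α : Type*} [PseudoMetricSpace α] {f g : α → ℝ}
    (hf : LocallyLipschitz f) (hg : LocallyLipschitz g) : LocallyLipschitz fun x ↦ f x * g x :=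
  (contDiff_mul (𝕜 := ℝ)).locallyLipschitz.comp (hf.prodMk hg)

lemma locallyLipschitz_mul_abs : LocallyLipschitz fun x : ℝ ↦ x * |x| :=
  LocallyLipschitz.id.mul' lipschitzWith_one_norm.locallyLipschitz

lemma LocallyLipschitz.exists_lipschitzOnWith_image_Icc_union {α β : Type*}
    [PseudoMetricSpace α] [PseudoMetricSpace β] {v : α → β} (hv : LocallyLipschitz v)
    {f g : ℝ → α} {a b : ℝ} (hf : ContinuousOn f (Icc a b)) (hg : ContinuousOn g (Icc a b)) :
    ∃ K, LipschitzOnWith K v (f '' Icc a b ∪ g '' Icc a b) :=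
  hv.locallyLipschitzOn.exists_lipschitzOnWith_of_compact
    ((isCompact_Icc.image_of_continuousOn hf).union (isCompact_Icc.image_of_continuousOn hg))

section ODE

variable {E : Type*} [NormedAddCommGroup E] [NormedSpace ℝ E] {v : E → E} {f g : ℝ → E}
  {J : Set ℝ} {t₀ : ℝ}

theorem ODE_solution_unique_of_locallyLipschitz (hv : LocallyLipschitz v) (hJ : J.OrdConnected)
    (hf : ∀ t ∈ J, HasDerivAt f (v (f t)) t) (hg : ∀ t ∈ J, HasDerivAt g (v (g t)) t)
    (ht₀ : t₀ ∈ J) (heq : f t₀ = g t₀) : EqOn f g J := by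
  intro t ht
  rcases le_total t₀ t with h | h
  · have hsub : Icc t₀ t ⊆ J := hJ.out ht₀ ht
    have hfc := HasDerivAt.continuousOn fun s hs ↦ hf s (hsub hs)
    have hgc := HasDerivAt.continuousOn fun s hs ↦ hg s (hsub hs)
    obtain ⟨K, hK⟩ := hv.exists_lipschitzOnWith_image_Icc_union hfc hgc
    exact ODE_solution_unique_of_mem_Icc_right (fun _ _ ↦ hK) hfc
      (fun s hs ↦ (hf s (hsub (Ico_subset_Icc_self hs))).hasDerivWithinAt)
      (fun s hs ↦ .inl (mem_image_of_mem f (Ico_subset_Icc_self hs))) hgc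
      (fun s hs ↦ (hg s (hsub (Ico_subset_Icc_self hs))).hasDerivWithinAt)
      (fun s hs ↦ .inr (mem_image_of_mem g (Ico_subset_Icc_self hs))) heq ⟨h, le_rfl⟩
  · have hsub : Icc t t₀ ⊆ J := hJ.out ht ht₀
    have hfc := HasDerivAt.continuousOn fun s hs ↦ hf s (hsub hs)
    have hgc := HasDerivAt.continuousOn fun s hs ↦ hg s (hsub hs)
    obtain ⟨K, hK⟩ := hv.exists_lipschitzOnWith_image_Icc_union hfc hgc
    exact ODE_solution_unique_of_mem_Icc_left (fun _ _ ↦ hK) hfc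
      (fun s hs ↦ (hf s (hsub (Ioc_subset_Icc_self hs))).hasDerivWithinAt)
      (fun s hs ↦ .inl (mem_image_of_mem f (Ioc_subset_Icc_self hs))) hgc
      (fun s hs ↦ (hg s (hsub (Ioc_subset_Icc_self hs))).hasDerivWithinAt)
      (fun s hs ↦ .inr (mem_image_of_mem g (Ioc_subset_Icc_self hs))) heq ⟨le_rfl, h⟩

end ODE

lemma not_tendsto_nhds_of_eventuallyEq_affine {f : ℝ → ℝ} {a c : ℝ} (hc : c ≠ 0)
    (hf : f =ᶠ[atTop] fun t ↦ a + c * t) (y : ℝ) : ¬ Tendsto f atTop (𝓝 y) := by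
  intro hy
  have hid : Tendsto (fun t ↦ (f t - a) / c) atTop (𝓝 ((y - a) / c)) :=
    (hy.sub_const a).div_const c
  refine not_tendsto_nhds_of_tendsto_atTop tendsto_id _ (hid.congr' ?_)
  filter_upwards [hf] with t ht
  rw [ht, add_sub_cancel_left, mul_div_cancel_left₀ _ hc, id]

def heatField (Th1 Th2 Th3 rhos lam L d hc Qa1 Qa2 QL1 QL2 : ℝ) (p : ℝ × ℝ × ℝ) : ℝ × ℝ × ℝ :=
  (fh1 Th1 Th2 rhos hc Qa1 Qa2 QL1 QL2 p.2.1, fh2 Th3 rhos lam L d p.1 p.2.1,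
    Qa1 - QL1 + Qa2 - QL2)

lemma heatField_locallyLipschitz (Th1 Th2 Th3 rhos lam L d hc Qa1 Qa2 QL1 QL2 : ℝ) :
    LocallyLipschitz (heatField Th1 Th2 Th3 rhos lam L d hc Qa1 Qa2 QL1 QL2) := by
  have hfh1 : ContDiff ℝ 1 fun p : ℝ × ℝ × ℝ ↦ fh1 Th1 Th2 rhos hc Qa1 Qa2 QL1 QL2 p.2.1 := by
    unfold fh1; fun_prop
  have hfh2 : ContDiff ℝ 1 fun q : ℝ × ℝ ↦ (q.1 / rhos - lam * L / (2 * d) * q.2) / Th3 := by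
    fun_prop
  have hnonsmooth : LocallyLipschitz fun p : ℝ × ℝ × ℝ ↦ (p.1, p.2.1 * |p.2.1|) :=
    LipschitzWith.prod_fst.locallyLipschitz.prodMk <| locallyLipschitz_mul_abs.comp
      (LipschitzWith.prod_fst.comp LipschitzWith.prod_snd).locallyLipschitz
  have hfh2_comp : (fun p : ℝ × ℝ × ℝ ↦ fh2 Th3 rhos lam L d p.1 p.2.1) =
      (fun q : ℝ × ℝ ↦ (q.1 / rhos - lam * L / (2 * d) * q.2) / Th3) ∘
        fun p ↦ (p.1, p.2.1 * |p.2.1|) := by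
    ext p; simp only [fh2, Function.comp_apply, mul_assoc]
  refine hfh1.locallyLipschitz.prodMk (LocallyLipschitz.prodMk ?_ (.const _))
  rw [hfh2_comp]
  exact hfh2.locallyLipschitz.comp hnonsmooth

theorem heat_subsystem_explicit_solution_on_manifold_general
    (Th1 Th2 Th3 rhos lam L d hc : ℝ)
    (Qa1 Qa2 QL1 QL2 : ℝ)
    (J : Set ℝ) (hJ : J.OrdConnected) (h0J : (0 : ℝ) ∈ J)
    (x1 x2 x3 : ℝ → ℝ)
    (hsol : ∀ t ∈ J,
      HasDerivAt x1 (fh1 Th1 Th2 rhos hc Qa1 Qa2 QL1 QL2 (x2 t)) t ∧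
      HasDerivAt x2 (fh2 Th3 rhos lam L d (x1 t) (x2 t)) t ∧
      HasDerivAt x3 (Qa1 - QL1 + Qa2 - QL2) t)
    (hinit : fh1 Th1 Th2 rhos hc Qa1 Qa2 QL1 QL2 (x2 0) = 0 ∧
             fh2 Th3 rhos lam L d (x1 0) (x2 0) = 0) :
    (∀ t ∈ J,
      x1 t = x1 0 ∧ x2 t = x2 0 ∧
      x3 t = x3 0 + (Qa1 + Qa2 - QL1 - QL2) * t) ∧
    (Qa1 + Qa2 ≠ QL1 + QL2 → Set.Ici (0 : ℝ) ⊆ J →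
      ¬ ∃ p : ℝ × ℝ × ℝ,
        Filter.Tendsto (fun t => (x1 t, x2 t, x3 t)) Filter.atTop (nhds p)) := by
  set c := Qa1 + Qa2 - QL1 - QL2
  set F := heatField Th1 Th2 Th3 rhos lam L d hc Qa1 Qa2 QL1 QL2
  have hx : ∀ t ∈ J, HasDerivAt (fun t ↦ (x1 t, x2 t, x3 t)) (F (x1 t, x2 t, x3 t)) t :=
    fun t ht ↦ let ⟨h1, h2, h3⟩ := hsol t ht; h1.prodMk (h2.prodMk h3)
  have hF : ∀ y, F (x1 0, x2 0, y) = (0, 0, c) := fun y ↦ by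
    simp only [F, heatField, hinit, c]; congr 2; ring
  have hdrift : ∀ t ∈ J, HasDerivAt (fun t ↦ (x1 0, x2 0, x3 0 + c * t))
      (F (x1 0, x2 0, x3 0 + c * t)) t := fun t _ ↦ by
    rw [hF]
    exact (hasDerivAt_const t (x1 0)).prodMk ((hasDerivAt_const t (x2 0)).prodMk
      (by simpa using ((hasDerivAt_id' t).const_mul c).const_add (x3 0)))
  have hexplicit := ODE_solution_unique_of_locallyLipschitz
    (heatField_locallyLipschitz Th1 Th2 Th3 rhos lam L d hc Qa1 Qa2 QL1 QL2) hJ hx hdrift h0J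
    (by simp)
  refine ⟨fun t ht ↦ by simpa [Prod.ext_iff] using hexplicit ht, ?_⟩
  rintro hne hIci ⟨p, hp⟩
  refine not_tendsto_nhds_of_eventuallyEq_affine (f := x3) (a := x3 0) (c := c)
    (sub_ne_zero.2 (by contrapose! hne; linarith)) ?_ p.2.2 hp.snd_nhds.snd_nhds
  filter_upwards [eventually_ge_atTop 0] with t ht
  exact (Prod.ext_iff.1 (Prod.ext_iff.1 (hexplicit (hIci ht))).2).2

/-- Every solution of the heat subsystem starting in `I_h`
has constant first two components and linearly drifting third component
`x_h3(t) = x_h3(0) + (Q'_a1 + Q'_a2 − Q'_L1 − Q'_L2)·t`; in particular, if the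
total heat generation differs from the total heat load, no solution starting
in `I_h` (and defined for all `t ≥ 0`) converges as `t → ∞`. -/
theorem heat_subsystem_explicit_solution_on_manifold
    (Th1 Th2 Th3 rhos lam L d hc : ℝ)
    (hTh1 : 0 < Th1) (hTh2 : 0 < Th2) (hTh3 : 0 < Th3) (hrhos : 0 < rhos)
    (hlam : 0 < lam) (hL : 0 < L) (hd : 0 < d) (hhc : 0 < hc)
    (Qa1 Qa2 QL1 QL2 : ℝ)
    (J : Set ℝ) (hJ : J.OrdConnected) (h0J : (0 : ℝ) ∈ J)
    (x1 x2 x3 : ℝ → ℝ)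
    (hsol : ∀ t ∈ J,
      HasDerivAt x1 (fh1 Th1 Th2 rhos hc Qa1 Qa2 QL1 QL2 (x2 t)) t ∧
      HasDerivAt x2 (fh2 Th3 rhos lam L d (x1 t) (x2 t)) t ∧
      HasDerivAt x3 (Qa1 - QL1 + Qa2 - QL2) t)
    (hinit : fh1 Th1 Th2 rhos hc Qa1 Qa2 QL1 QL2 (x2 0) = 0 ∧
             fh2 Th3 rhos lam L d (x1 0) (x2 0) = 0) :
    (∀ t ∈ J,
      x1 t = x1 0 ∧ x2 t = x2 0 ∧
      x3 t = x3 0 + (Qa1 + Qa2 - QL1 - QL2) * t) ∧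
    (Qa1 + Qa2 ≠ QL1 + QL2 → Set.Ici (0 : ℝ) ⊆ J →
      ¬ ∃ p : ℝ × ℝ × ℝ,
        Filter.Tendsto (fun t => (x1 t, x2 t, x3 t)) Filter.atTop (nhds p)) :=
  heat_subsystem_explicit_solution_on_manifold_general Th1 Th2 Th3 rhos lam L d hc Qa1 Qa2 QL1 QL2 J
    hJ h0J x1 x2 x3 hsol hinit
end
end

section
/- For the heat subsystem of the two-site system with constant boiler heat inputs, the set I_h := { x_h ∈ ℝ³ : f_h1(x_h) = 0 and f_h2(x_h) = 0 } (f_h1, f_h2 the right-hand sides of the x_h1- and x_h2-equations) is exactly the one-dimensional line { (x_h1*, x_h2*, a) : a ∈ ℝ }, where x_h2* = ((Q'_a1 − Q'_L1)/T_h1 − (Q'_a2 − Q'_L2)/T_h2) / ( c·(1/T_h1 + 1/T_h2) ) with c := (π/4)·h_c·ρ_s, and x_h1* = ρ_s·(λL/(2d))·x_h2*·|x_h2*|. Moreover, the set of equilibrium points of the heat subsystem is empty if Q'_a1 + Q'_a2 ≠ Q'_L1 + Q'_L2, and equals the whole line I_h if Q'_a1 + Q'_a2 = Q'_L1 + Q'_L2;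 in particular the heat subsystem never possesses an isolated equilibrium point. -/
/-!
The `x_h2`-equation is affine in `x_h2` with nonzero slope `c·(1/T_h1 + 1/T_h2)`, so it fixes
`x_h2 = x_h2*`; the `x_h1`-equation then fixes `x_h1 = x_h1*`. Neither equation, nor the
`x_h3`-equation (a constant), involves `x_h3`, so both sets are unions of lines parallel to the
`x_h3`-axis and no point of them is isolated.
-/

lemma sub_div_sub_add_div_eq_zero_iff {a b c T₁ T₂ t : ℝ} (hc : c ≠ 0) (hT₁ : 0 < T₁)
    (hT₂ : 0 < T₂) :
    (a - c * t) / T₁ - (b + c * t) / T₂ = 0 ↔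
      t = (a / T₁ - b / T₂) / (c * (1 / T₁ + 1 / T₂)) := by
  have hslope : c * (1 / T₁ + 1 / T₂) ≠ 0 := mul_ne_zero hc (by positivity)
  have haffine : (a - c * t) / T₁ - (b + c * t) / T₂ =
      (a / T₁ - b / T₂) - t * (c * (1 / T₁ + 1 / T₂)) := by ring
  rw [haffine, sub_eq_zero, eq_div_iff hslope, eq_comm]

lemma div_sub_div_eq_zero_iff {s k ρ T : ℝ} (hρ : ρ ≠ 0) (hT : T ≠ 0) :
    (s / ρ - k) / T = 0 ↔ s = ρ * k := by
  rw [div_eq_zero_iff, or_iff_left hT, sub_eq_zero, div_eq_iff hρ, mul_comm]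

lemma exists_ne_dist_lt_of_forall_mk_mem {α β : Type*} [PseudoMetricSpace α]
    [PseudoMetricSpace β] {S : Set (α × β × ℝ)} (hS : ∀ x ∈ S, ∀ a : ℝ, (x.1, x.2.1, a) ∈ S)
    {p : α × β × ℝ} (hp : p ∈ S) {ε : ℝ} (hε : 0 < ε) :
    ∃ q ∈ S, q ≠ p ∧ dist q p < ε := by
  refine ⟨(p.1, p.2.1, p.2.2 + ε / 2), hS p hp _, fun h => ?_, ?_⟩
  · have := congrArg (fun x : α × β × ℝ => x.2.2) h
    simp only [add_eq_left] at this
    linarith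
  · simp [Prod.dist_eq, abs_of_pos hε, hε]

theorem heat_subsystem_manifold_structure_general
    (Th1 Th2 Th3 rhos lam L d hc : ℝ)
    (hTh1 : 0 < Th1) (hTh2 : 0 < Th2) (hTh3 : 0 < Th3) (hrhos : 0 < rhos)
    (hhc : 0 < hc)
    (Qa1 Qa2 QL1 QL2 : ℝ)
    -- the constant `c = (π/4)·h_c·ρ_s` and the distinguished point
    (c x2star x1star : ℝ)
    (hc_def : c = (Real.pi / 4) * hc * rhos)
    (hx2star : x2star =
      ((Qa1 - QL1) / Th1 - (Qa2 - QL2) / Th2) / (c * (1 / Th1 + 1 / Th2)))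
    (hx1star : x1star = rhos * (lam * L / (2 * d)) * x2star * |x2star|)
    -- the invariant set `I_h` and the equilibrium set `Eq`
    (Ih Eq : Set (ℝ × ℝ × ℝ))
    (hIh : Ih = { x : ℝ × ℝ × ℝ |
      (Qa1 - QL1 - c * x.2.1) / Th1 - (Qa2 - QL2 + c * x.2.1) / Th2 = 0 ∧
      (x.1 / rhos - (lam * L / (2 * d)) * x.2.1 * |x.2.1|) / Th3 = 0 })
    (hEq : Eq = { x : ℝ × ℝ × ℝ |
      (Qa1 - QL1 - c * x.2.1) / Th1 - (Qa2 - QL2 + c * x.2.1) / Th2 = 0 ∧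
      (x.1 / rhos - (lam * L / (2 * d)) * x.2.1 * |x.2.1|) / Th3 = 0 ∧
      Qa1 - QL1 + Qa2 - QL2 = 0 }) :
    Ih = { x : ℝ × ℝ × ℝ | ∃ a : ℝ, x = (x1star, x2star, a) } ∧
    (Qa1 + Qa2 ≠ QL1 + QL2 → Eq = ∅) ∧
    (Qa1 + Qa2 = QL1 + QL2 → Eq = Ih) ∧
    (∀ p ∈ Eq, ∀ ε > (0 : ℝ), ∃ q ∈ Eq, q ≠ p ∧ dist q p < ε) := by
  have hc0 : c ≠ 0 := by rw [hc_def]; positivity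
  have hbalance : ∀ t : ℝ,
      (Qa1 - QL1 - c * t) / Th1 - (Qa2 - QL2 + c * t) / Th2 = 0 ↔ t = x2star := fun t => by
    rw [hx2star, sub_div_sub_add_div_eq_zero_iff hc0 hTh1 hTh2]
  have hflow : ∀ s t : ℝ, (s / rhos - (lam * L / (2 * d)) * t * |t|) / Th3 = 0 ↔
      s = rhos * (lam * L / (2 * d)) * t * |t| := fun s t => by
    rw [div_sub_div_eq_zero_iff hrhos.ne' hTh3.ne', mul_assoc, mul_assoc, mul_assoc]
  subst hIh hEq
  refine ⟨?_, fun hne => ?_, fun hbal => ?_, fun p hp ε hε => ?_⟩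
  · ext ⟨x1, x2, x3⟩
    simp only [Set.mem_ofPred_eq, Prod.mk.injEq, hbalance, hflow, exists_and_left, exists_eq',
      and_true]
    constructor
    · rintro ⟨rfl, rfl⟩; exact ⟨hx1star.symm, rfl⟩
    · rintro ⟨rfl, rfl⟩; exact ⟨rfl, hx1star⟩
  · exact Set.eq_empty_of_forall_notMem fun x hx => hne (by linarith [hx.2.2])
  · ext x
    exact ⟨fun hx => ⟨hx.1, hx.2.1⟩, fun hx => ⟨hx.1, hx.2, by linarith⟩⟩
  · exact exists_ne_dist_lt_of_forall_mk_mem (fun x hx a => hx) hp hε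

/-- Structure of `I_h` and of the equilibrium set of the heat
subsystem. -/
theorem heat_subsystem_manifold_structure
    (Th1 Th2 Th3 rhos lam L d hc : ℝ)
    (hTh1 : 0 < Th1) (hTh2 : 0 < Th2) (hTh3 : 0 < Th3) (hrhos : 0 < rhos)
    (hlam : 0 < lam) (hL : 0 < L) (hd : 0 < d) (hhc : 0 < hc)
    (Qa1 Qa2 QL1 QL2 : ℝ)
    -- the constant `c = (π/4)·h_c·ρ_s` and the distinguished point
    (c x2star x1star : ℝ)
    (hc_def : c = (Real.pi / 4) * hc * rhos)
    (hx2star : x2star =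
      ((Qa1 - QL1) / Th1 - (Qa2 - QL2) / Th2) / (c * (1 / Th1 + 1 / Th2)))
    (hx1star : x1star = rhos * (lam * L / (2 * d)) * x2star * |x2star|)
    -- the invariant set `I_h` and the equilibrium set `Eq`
    (Ih Eq : Set (ℝ × ℝ × ℝ))
    (hIh : Ih = { x : ℝ × ℝ × ℝ |
      (Qa1 - QL1 - c * x.2.1) / Th1 - (Qa2 - QL2 + c * x.2.1) / Th2 = 0 ∧
      (x.1 / rhos - (lam * L / (2 * d)) * x.2.1 * |x.2.1|) / Th3 = 0 })
    (hEq : Eq = { x : ℝ × ℝ × ℝ |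
      (Qa1 - QL1 - c * x.2.1) / Th1 - (Qa2 - QL2 + c * x.2.1) / Th2 = 0 ∧
      (x.1 / rhos - (lam * L / (2 * d)) * x.2.1 * |x.2.1|) / Th3 = 0 ∧
      Qa1 - QL1 + Qa2 - QL2 = 0 }) :
    Ih = { x : ℝ × ℝ × ℝ | ∃ a : ℝ, x = (x1star, x2star, a) } ∧
    (Qa1 + Qa2 ≠ QL1 + QL2 → Eq = ∅) ∧
    (Qa1 + Qa2 = QL1 + QL2 → Eq = Ih) ∧
    (∀ p ∈ Eq, ∀ ε > (0 : ℝ), ∃ q ∈ Eq, q ≠ p ∧ dist q p < ε) :=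
  heat_subsystem_manifold_structure_general Th1 Th2 Th3 rhos lam L d hc hTh1 hTh2 hTh3 hrhos hhc Qa1
    Qa2 QL1 QL2 c x2star x1star hc_def hx2star hx1star Ih Eq hIh hEq
end

section
/- Let F = (F1, F2, F3, F4) : ℝ⁴ → ℝ⁴ be locally Lipschitz and independent of the fourth coordinate, i.e. F(η1, η2, η3, η4) = F(η1, η2, η3, η4') for all η1, η2, η3, η4, η4' ∈ ℝ, and define I := { η ∈ ℝ⁴ : F1(η) = F2(η) = F3(η) = 0 }. Then I is invariant under the flow of η̇ = F(η): every solution η : J → ℝ⁴ defined on an interval J containing 0 with η(0) ∈ I satisfies η(t) ∈ I for all t ∈ J; moreover η1(t) = η1(0), η2(t) = η2(0), η3(t) = η3(0), and η4(t) = η4(0) + F4(η(0))·t for all t ∈ J. -/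
/-!
Since `F` ignores the fourth coordinate, it is constant, equal to `F (η 0)`, along the line
`γ t = η 0 + t • F (η 0)`, which only moves the fourth coordinate when `η 0 ∈ I`. Hence `γ` solves
`η̇ = F η`, and uniqueness of solutions for locally Lipschitz fields (on compact time intervals
the field is Lipschitz on the compact set swept by the two solutions) forces `η = γ` on `J`.
-/

open Set Function

theorem LocallyLipschitz.eqOn_of_hasDerivAt {E : Type*} [NormedAddCommGroup E]
    [NormedSpace ℝ E] {v : E → E} (hv : LocallyLipschitz v) {J : Set ℝ} (hJ : J.OrdConnected)
    {f g : ℝ → E} {t₀ : ℝ} (ht₀ : t₀ ∈ J) (hf : ∀ t ∈ J, HasDerivAt f (v (f t)) t)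
    (hg : ∀ t ∈ J, HasDerivAt g (v (g t)) t) (heq : f t₀ = g t₀) : EqOn f g J := by
  intro t ht
  have hsub : Icc (min t₀ t) (max t₀ t) ⊆ J := hJ.uIcc_subset ht₀ ht
  have hfc : ContinuousOn f (Icc (min t₀ t) (max t₀ t)) :=
    fun s hs ↦ (hf s (hsub hs)).continuousAt.continuousWithinAt
  have hgc : ContinuousOn g (Icc (min t₀ t) (max t₀ t)) :=
    fun s hs ↦ (hg s (hsub hs)).continuousAt.continuousWithinAt
  obtain ⟨K, hK⟩ := LocallyLipschitzOn.exists_lipschitzOnWith_of_compact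
    ((isCompact_Icc.image_of_continuousOn hfc).union (isCompact_Icc.image_of_continuousOn hgc))
    hv.locallyLipschitzOn
  rcases le_total t₀ t with h | h
  · simp only [min_eq_left h, max_eq_right h] at hsub hfc hgc hK
    exact ODE_solution_unique_of_mem_Icc_right (v := fun _ ↦ v) (fun _ _ ↦ hK) hfc
      (fun s hs ↦ (hf s (hsub (Ico_subset_Icc_self hs))).hasDerivWithinAt)
      (fun s hs ↦ .inl (mem_image_of_mem f (Ico_subset_Icc_self hs))) hgc
      (fun s hs ↦ (hg s (hsub (Ico_subset_Icc_self hs))).hasDerivWithinAt)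
      (fun s hs ↦ .inr (mem_image_of_mem g (Ico_subset_Icc_self hs))) heq ⟨h, le_rfl⟩
  · simp only [min_eq_right h, max_eq_left h] at hsub hfc hgc hK
    exact ODE_solution_unique_of_mem_Icc_left (v := fun _ ↦ v) (fun _ _ ↦ hK) hfc
      (fun s hs ↦ (hf s (hsub (Ioc_subset_Icc_self hs))).hasDerivWithinAt)
      (fun s hs ↦ .inl (mem_image_of_mem f (Ioc_subset_Icc_self hs))) hgc
      (fun s hs ↦ (hg s (hsub (Ioc_subset_Icc_self hs))).hasDerivWithinAt)
      (fun s hs ↦ .inr (mem_image_of_mem g (Ioc_subset_Icc_self hs))) heq ⟨le_rfl, h⟩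

theorem hasDerivAt_update_affine {ι : Type*} [Fintype ι] [DecidableEq ι]
    {F : (ι → ℝ) → (ι → ℝ)} {i : ι} (hind : ∀ x d, F (update x i d) = F x) {x : ι → ℝ}
    (hx : ∀ j ≠ i, F x j = 0) (u : ℝ) :
    HasDerivAt (fun u ↦ update x i (x i + F x i * u)) (F (update x i (x i + F x i * u))) u := by
  rw [hind, hasDerivAt_pi]
  intro j
  rcases eq_or_ne j i with rfl | hj
  · simpa using ((hasDerivAt_id u).const_mul (F x j)).const_add (x j)
  · simpa [update_of_ne hj, hx j hj] using hasDerivAt_const u (x j)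

/-- Invariance of `I = {F₁ = F₂ = F₃ = 0}` for a locally
Lipschitz `F : ℝ⁴ → ℝ⁴` independent of the fourth coordinate, together with
the explicit form of solutions starting on `I`. -/
theorem invariant_manifold_of_zero_dynamics
    (F : (Fin 4 → ℝ) → (Fin 4 → ℝ))
    (hLip : LocallyLipschitz F)
    (hind : ∀ (η : Fin 4 → ℝ) (d' : ℝ), F (Function.update η 3 d') = F η)
    (J : Set ℝ) (hJ : J.OrdConnected) (h0J : (0 : ℝ) ∈ J)
    (η : ℝ → (Fin 4 → ℝ))
    (hsol : ∀ t ∈ J, HasDerivAt η (F (η t)) t)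
    (hinit : F (η 0) 0 = 0 ∧ F (η 0) 1 = 0 ∧ F (η 0) 2 = 0) :
    ∀ t ∈ J,
      (F (η t) 0 = 0 ∧ F (η t) 1 = 0 ∧ F (η t) 2 = 0) ∧
      η t 0 = η 0 0 ∧ η t 1 = η 0 1 ∧ η t 2 = η 0 2 ∧
      η t 3 = η 0 3 + F (η 0) 3 * t := by
  have hflat : ∀ j ≠ 3, F (η 0) j = 0 := by
    obtain ⟨h0, h1, h2⟩ := hinit
    intro j hj
    fin_cases j <;> simp_all
  have hη : EqOn η (fun t ↦ update (η 0) 3 (η 0 3 + F (η 0) 3 * t)) J :=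
    hLip.eqOn_of_hasDerivAt hJ h0J hsol (fun t _ ↦ hasDerivAt_update_affine hind hflat t)
      (by simp)
  intro t ht
  rw [hη ht, hind]
  exact ⟨hinit, by simp [update_of_ne], by simp [update_of_ne], by simp [update_of_ne], by simp⟩
end
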